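/- arXiv:1305.7293 — 3 statements merged into one kernel-verified Lean document; each statement's English description precedes it below -/
import Mathlib

section
/- Let A = M₂(ℂ) ⊕ M₂(ℂ) and let D ≅ ℂ⊕ℂ⊕ℂ be the unital C*-subalgebra of A consisting of elements diag(a,b) ⊕ diag(b,c) for a,b,c ∈ ℂ. Let F : A → D be the conditional expectation sending (a_{ij}) ⊕ (b_{ij}) to the element of D with parameters (a₁₁, (a₂₂+b₁₁)/2, b₂₂), and let ρ be the state on D given by ρ(a,b,c) = a. Then the kernel of the GNS representation π_{ρ∘F} of A equals 0 ⊕ M₂(ℂ), and the element x = 0 ⊕ diag(2,0) lies in ker π_{ρ∘F} while F(x) = diag(0,1) ⊕ diag(1,0) does not; in particular, the inequality ‖π_{ρ∘F}(F(x))‖ ≤ ‖π_{ρ∘F}(x)‖ fails. -/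
open scoped ComplexOrder InnerProductSpace

noncomputable section

namespace QSSPaper

/-- Ordered product of a finite sequence in a monoid. -/
def seqProd {M : Type*} [Monoid M] {n : ℕ} (f : Fin n → M) : M := (List.ofFn f).prod

section CStar

variable {B : Type*}

/-- A state on a unital C*-algebra, as a plain function with the defining properties. -/
def IsStateFun [CStarAlgebra B] (φ : B → ℂ) : Prop :=
  φ 1 = 1 ∧ (∀ x y, φ (x + y) = φ x + φ y) ∧ (∀ (c : ℂ) (x : B), φ (c • x) = c * φ x) ∧
    ∀ x, 0 ≤ φ (star x * x)

/-- A state on a subset `D` (thought of as a unital C*-subalgebra). -/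
def IsStateOn [CStarAlgebra B] (D : Set B) (φ : B → ℂ) : Prop :=
  φ 1 = 1 ∧ (∀ x ∈ D, ∀ y ∈ D, φ (x + y) = φ x + φ y) ∧
    (∀ (c : ℂ), ∀ x ∈ D, φ (c • x) = c * φ x) ∧ ∀ x ∈ D, 0 ≤ φ (star x * x)

/-- Traciality of a functional on a subset. -/
def IsTracialOn [Mul B] (D : Set B) (φ : B → ℂ) : Prop :=
  ∀ x ∈ D, ∀ y ∈ D, φ (x * y) = φ (y * x)

/-- `φ` is a pure state on the subalgebra `D`. -/
def IsPureOn [CStarAlgebra B] (D : Set B) (φ : B → ℂ) : Prop :=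
  IsStateOn D φ ∧ ∀ φ₁ φ₂ : B → ℂ, IsStateOn D φ₁ → IsStateOn D φ₂ →
    ∀ t : ℝ, 0 < t → t < 1 → (∀ x ∈ D, φ x = t * φ₁ x + (1 - t) * φ₂ x) →
      ∀ x ∈ D, φ₁ x = φ₂ x

/-- `E` is a conditional expectation (projection of norm one) from `R` onto `D`. -/
def IsCondExpOn [CStarAlgebra B] (R D : Set B) (E : B → B) : Prop :=
  D ⊆ R ∧ (∀ x ∈ R, E x ∈ D) ∧ (∀ x ∈ D, E x = x) ∧ (∀ x ∈ R, ‖E x‖ ≤ ‖x‖) ∧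
    (∀ x ∈ R, ∀ y ∈ R, E (x + y) = E x + E y) ∧ (∀ (c : ℂ), ∀ x ∈ R, E (c • x) = c • E x)

/-- Freeness of a family of subsets with respect to a conditional expectation `E`:
centered words with consecutively distinct letters have vanishing expectation. -/
def IsFreeFamily [Monoid B] [Zero B] {ι : Type*} (E : B → B) (S : ι → Set B) : Prop :=
  ∀ (n : ℕ) (i : Fin (n + 1) → ι) (b : Fin (n + 1) → B),
    (∀ t, b t ∈ S (i t)) → (∀ t, E (b t) = 0) →
    (∀ t : Fin n, i t.castSucc ≠ i t.succ) → E (seqProd b) = 0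

/-- The GNS representation of the conditional expectation `E` is faithful on `Y`. -/
def FaithfulCEGNS [Mul B] [Star B] [Zero B] (Y : Set B) (E : B → B) : Prop :=
  ∀ x ∈ Y, (∀ a ∈ Y, E (star (x * a) * (x * a)) = 0) → x = 0

/-- The GNS representation of the state `φ` is faithful on `Y`. -/
def FaithfulStateGNS [Mul B] [Star B] [Zero B] (Y : Set B) (φ : B → ℂ) : Prop :=
  ∀ x ∈ Y, (∀ a ∈ Y, φ (star (x * a) * (x * a)) = 0) → x = 0

/-- Extreme point of a convex set (in a real vector space). -/
def IsExtremeIn {X : Type*} [AddCommGroup X] [Module ℝ X] (s : Set X) (x : X) : Prop :=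
  x ∈ s ∧ ∀ y ∈ s, ∀ z ∈ s, ∀ t : ℝ, 0 < t → t < 1 → x = t • y + (1 - t) • z → y = x ∧ z = x

end CStar

section FreeProduct

variable {A Afr : Type*} [CStarAlgebra A] [CStarAlgebra Afr]

/-- The universal property of `Afr = ⋆_{i∈ℕ} A` with canonical maps `lam i`. -/
def IsUnivFreeProduct (lam : ℕ → A →⋆ₐ[ℂ] Afr) : Prop :=
  ∀ (B : Type) [CStarAlgebra B], ∀ p : ℕ → (A →⋆ₐ[ℂ] B),
    ∃! h : Afr →⋆ₐ[ℂ] B, ∀ i, h.comp (lam i) = p i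

/-- The state `ψ` on `Afr` is symmetric (exchangeable) for the copies `lam i`. -/
def IsSymmetricState (lam : ℕ → A →⋆ₐ[ℂ] Afr) (ψ : Afr → ℂ) : Prop :=
  ∀ (σ : Equiv.Perm ℕ) (n : ℕ) (i : Fin n → ℕ) (a : Fin n → A),
    ψ (seqProd fun t => lam (i t) (a t)) = ψ (seqProd fun t => lam (σ (i t)) (a t))

/-- A magic unitary (quantum permutation) of size `k` in a unital *-algebra. -/
def IsMagicUnitary {C : Type*} [Ring C] [StarRing C] {k : ℕ} (u : Fin k → Fin k → C) : Prop :=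
  (∀ i j, star (u i j) = u i j ∧ u i j * u i j = u i j) ∧
    (∀ j, ∑ i, u i j = 1) ∧ ∀ i, ∑ j, u i j = 1

/-- `ψ` is quantum symmetric: its joint moments are invariant under the action of all
quantum permutations, i.e. of all magic unitaries in all unital C*-algebras (equivalently,
under the coaction of Wang's quantum permutation groups `A_s(k)`). -/
def IsQuantumSymmetric (lam : ℕ → A →⋆ₐ[ℂ] Afr) (ψ : Afr → ℂ) : Prop :=
  ∀ (k : ℕ) (C : Type) [CStarAlgebra C],
    ∀ u : Fin k → Fin k → C, IsMagicUnitary u →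
      ∀ (n : ℕ) (i : Fin n → Fin k) (a : Fin n → A),
        ψ (seqProd fun t => lam (i t) (a t)) • (1 : C) =
          ∑ j : Fin n → Fin k,
            ψ (seqProd fun t => lam (j t) (a t)) • seqProd fun t => u (i t) (j t)

/-- The set of symmetric states on `Afr`. -/
def SSset (lam : ℕ → A →⋆ₐ[ℂ] Afr) : Set (Afr → ℂ) :=
  {ψ | IsStateFun ψ ∧ IsSymmetricState lam ψ}

/-- The set of quantum symmetric states on `Afr`. -/
def QSSset (lam : ℕ → A →⋆ₐ[ℂ] Afr) : Set (Afr → ℂ) :=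
  {ψ | IsStateFun ψ ∧ IsQuantumSymmetric lam ψ}

/-- The set of tracial quantum symmetric states on `Afr`. -/
def TQSSset (lam : ℕ → A →⋆ₐ[ℂ] Afr) : Set (Afr → ℂ) :=
  {ψ | ψ ∈ QSSset lam ∧ ∀ x y : Afr, ψ (x * y) = ψ (y * x)}

/-- `ψ` is the (reduced) free product state `⋆_1^∞ φ` on `Afr`: its marginals are `φ` and the
copies of `A` are free with respect to `ψ`. -/
def IsFreeProdState (lam : ℕ → A →⋆ₐ[ℂ] Afr) (φ : A → ℂ) (ψ : Afr → ℂ) : Prop :=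
  IsStateFun ψ ∧ (∀ (i : ℕ) (a : A), ψ (lam i a) = φ a) ∧
    ∀ (n : ℕ) (i : Fin (n + 1) → ℕ) (a : Fin (n + 1) → A),
      (∀ t : Fin n, i t.castSucc ≠ i t.succ) → (∀ t, φ (a t) = 0) →
        ψ (seqProd fun t => lam (i t) (a t)) = 0

end FreeProduct

section GNS

variable {A Afr : Type*} [CStarAlgebra A] [CStarAlgebra Afr]
variable {H : Type*} [NormedAddCommGroup H] [InnerProductSpace ℂ H] [CompleteSpace H]

/-- The vector state associated to a vector `ξ`. -/
def vecState (ξ : H) (x : H →L[ℂ] H) : ℂ := ⟪ξ, x ξ⟫_ℂ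

/-- `(H, π, ξ)` is a GNS triple for the state `φ`. -/
def IsGNSRep {B : Type*} [CStarAlgebra B] (φ : B → ℂ) (π : B →⋆ₐ[ℂ] (H →L[ℂ] H)) (ξ : H) :
    Prop :=
  (∀ a : B, φ a = ⟪ξ, π a ξ⟫_ℂ) ∧
    Dense ((Submodule.span ℂ (Set.range fun a : B => π a ξ) : Submodule ℂ H) : Set H)

/-- The von Neumann algebra generated by a (star-closed) set: its double commutant. -/
def vNgen (S : Set (H →L[ℂ] H)) : Set (H →L[ℂ] H) := Set.centralizer (Set.centralizer S)

/-- The C*-algebra generated by a set of operators. -/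
def cstarGen (S : Set (H →L[ℂ] H)) : Set (H →L[ℂ] H) :=
  closure ((StarAlgebra.adjoin ℂ S : StarSubalgebra ℂ (H →L[ℂ] H)) : Set (H →L[ℂ] H))

/-- The tail (von Neumann) algebra of the representations `π ∘ lam i`. -/
def tailAlg (lam : ℕ → A →⋆ₐ[ℂ] Afr) (π : Afr →⋆ₐ[ℂ] (H →L[ℂ] H)) : Set (H →L[ℂ] H) :=
  ⋂ N : ℕ, vNgen (⋃ i : ℕ, ⋃ _ : N ≤ i, Set.range fun a : A => π (lam i a))

/-- Conjugation of an operator by a unitary (linear isometric equivalence). -/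
def conjU (V : H ≃ₗᵢ[ℂ] H) (x : H →L[ℂ] H) : H →L[ℂ] H :=
  ((V.toContinuousLinearEquiv : H →L[ℂ] H).comp x).comp
    (V.symm.toContinuousLinearEquiv : H →L[ℂ] H)

/-- `U` is the family of unitaries implementing the permutation action on the GNS space:
it fixes the cyclic vector and conjugation permutes the copies of `A`. -/
def ImplementsPerms (lam : ℕ → A →⋆ₐ[ℂ] Afr) (π : Afr →⋆ₐ[ℂ] (H →L[ℂ] H))
    (U : Equiv.Perm ℕ → (H ≃ₗᵢ[ℂ] H)) (ξ : H) : Prop :=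
  (∀ σ, U σ ξ = ξ) ∧ ∀ (σ : Equiv.Perm ℕ) (i : ℕ) (a : A),
    conjU (U σ) (π (lam i a)) = π (lam (σ i) a)

/-- The fixed-point algebra of the permutation action on `M_ψ = π(Afr)''`. -/
def fixAlg (π : Afr →⋆ₐ[ℂ] (H →L[ℂ] H)) (U : Equiv.Perm ℕ → (H ≃ₗᵢ[ℂ] H)) :
    Set (H →L[ℂ] H) :=
  {x | x ∈ vNgen (Set.range fun y : Afr => π y) ∧ ∀ σ, conjU (U σ) x = x}

/-- Convergence in the weak operator topology along a filter. -/
def WOTtendsto {ι : Type*} (x : ι → (H →L[ℂ] H)) (l : Filter ι) (y : H →L[ℂ] H) : Prop :=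
  ∀ ζ η : H, Filter.Tendsto (fun n => ⟪ζ, x n η⟫_ℂ) l (nhds ⟪ζ, y η⟫_ℂ)

/-- `alpha` is the shift *-endomorphism of the C*-algebra `R` (generated by `D` and `π(Afr)`):
it shifts the copies of `A`, fixes `D` pointwise, and is an isometric unital
*-homomorphism on `R`. -/
def IsShift (lam : ℕ → A →⋆ₐ[ℂ] Afr) (π : Afr →⋆ₐ[ℂ] (H →L[ℂ] H))
    (R D : Set (H →L[ℂ] H)) (alpha : (H →L[ℂ] H) → (H →L[ℂ] H)) : Prop :=
  (∀ x ∈ R, alpha x ∈ R) ∧ (∀ (i : ℕ) (a : A), alpha (π (lam i a)) = π (lam (i + 1) a)) ∧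
    (∀ x ∈ D, alpha x = x) ∧
    (∀ x ∈ R, ∀ y ∈ R, alpha (x + y) = alpha x + alpha y) ∧
    (∀ x ∈ R, ∀ y ∈ R, alpha (x * y) = alpha x * alpha y) ∧
    (∀ (c : ℂ), ∀ x ∈ R, alpha (c • x) = c • alpha x) ∧
    (∀ x ∈ R, alpha (star x) = star (alpha x)) ∧ ∀ x ∈ R, ‖alpha x‖ = ‖x‖

/-- `E` is the canonical conditional expectation from `R` onto `D` obtained as the
weak-operator limit of the powers of a shift endomorphism. -/
def IsCanonicalCE (lam : ℕ → A →⋆ₐ[ℂ] Afr) (π : Afr →⋆ₐ[ℂ] (H →L[ℂ] H))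
    (R D : Set (H →L[ℂ] H)) (E : (H →L[ℂ] H) → (H →L[ℂ] H)) : Prop :=
  IsCondExpOn R D E ∧ ∃ alpha, IsShift lam π R D alpha ∧
    ∀ x ∈ R, WOTtendsto (fun n => alpha^[n] x) Filter.atTop (E x)

/-- Normality (σ-weak continuity) of a map on `M`: continuity for the weak operator
topology along bounded nets. -/
def NormalOn {K : Type*} [NormedAddCommGroup K] [InnerProductSpace ℂ K] [CompleteSpace K]
    (M : Set (H →L[ℂ] H)) (E : (H →L[ℂ] H) → (K →L[ℂ] K)) : Prop :=
  ∀ (ι : Type) (l : Filter ι) (x : ι → (H →L[ℂ] H)) (y : H →L[ℂ] H) (c : ℝ),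
    (∀ n, x n ∈ M) → y ∈ M → (∀ n, ‖x n‖ ≤ c) → WOTtendsto x l y →
      WOTtendsto (fun n => E (x n)) l (E y)

/-- Normality (σ-weak continuity) of a functional on `M`. -/
def NormalFnOn (M : Set (H →L[ℂ] H)) (φ : (H →L[ℂ] H) → ℂ) : Prop :=
  ∀ (ι : Type) (l : Filter ι) (x : ι → (H →L[ℂ] H)) (y : H →L[ℂ] H) (c : ℝ),
    (∀ n, x n ∈ M) → y ∈ M → (∀ n, ‖x n‖ ≤ c) → WOTtendsto x l y →
      Filter.Tendsto (fun n => φ (x n)) l (nhds (φ y))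

/-- The alternating product `π_{i₀}(a₀) x₀ π_{i₁}(a₁) x₁ ⋯ x_{n-1} π_{iₙ}(aₙ)`. -/
def interProd (lam : ℕ → A →⋆ₐ[ℂ] Afr) (π : Afr →⋆ₐ[ℂ] (H →L[ℂ] H)) {n : ℕ}
    (i : Fin (n + 1) → ℕ) (a : Fin (n + 1) → A) (x : Fin n → (H →L[ℂ] H)) : H →L[ℂ] H :=
  (seqProd fun t : Fin n => π (lam (i t.castSucc) (a t.castSucc)) * x t) *
    π (lam (i (Fin.last n)) (a (Fin.last n)))

/-- A closed unital *-subalgebra of the tail algebra `T` which is stable under taking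
`E`-expectations of alternating words. -/
def IsTailLike (lam : ℕ → A →⋆ₐ[ℂ] Afr) (π : Afr →⋆ₐ[ℂ] (H →L[ℂ] H))
    (T : Set (H →L[ℂ] H)) (E : (H →L[ℂ] H) → (H →L[ℂ] H)) (Z : Set (H →L[ℂ] H)) : Prop :=
  (1 : H →L[ℂ] H) ∈ Z ∧ Z ⊆ T ∧ IsClosed Z ∧
    (∀ x ∈ Z, ∀ y ∈ Z, x + y ∈ Z ∧ x * y ∈ Z) ∧ (∀ (c : ℂ), ∀ x ∈ Z, c • x ∈ Z) ∧
    (∀ x ∈ Z, star x ∈ Z) ∧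
    ∀ (n : ℕ) (i : Fin (n + 1) → ℕ) (a : Fin (n + 1) → A) (x : Fin n → (H →L[ℂ] H)),
      (∀ t, x t ∈ Z) → E (interProd lam π i a x) ∈ Z

/-- The tail C*-algebra: the smallest tail-like subalgebra. -/
def tailCStar (lam : ℕ → A →⋆ₐ[ℂ] Afr) (π : Afr →⋆ₐ[ℂ] (H →L[ℂ] H))
    (T : Set (H →L[ℂ] H)) (E : (H →L[ℂ] H) → (H →L[ℂ] H)) : Set (H →L[ℂ] H) :=
  ⋂₀ {Z | IsTailLike lam π T E Z}

end GNS


/-- A GNS triple for a linear functional on a unital *-algebra: `ξ` is a cyclic vector and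
the functional is the corresponding vector state. -/
def IsGNSRepAlg {B H : Type} [Ring B] [Algebra ℂ B] [StarRing B]
    [NormedAddCommGroup H] [InnerProductSpace ℂ H] [CompleteSpace H]
    (φ : B → ℂ) (π : B →⋆ₐ[ℂ] (H →L[ℂ] H)) (ξ : H) : Prop :=
  (∀ a : B, φ a = ⟪ξ, π a ξ⟫_ℂ) ∧
    Dense ((Submodule.span ℂ (Set.range fun a : B => π a ξ) : Submodule ℂ H) : Set H)
end QSSPaper

/-! `ρ ∘ F` is `p ↦ (p.1)₀₀`, so in its GNS representation `‖π(a) ξ‖²` is the squared norm of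
the first column of `a.1`. Since `π p = 0` iff `π(p a) ξ = 0` for all `a`, and right
multiplication by matrix units brings every column of `p.1` into the first one, the kernel is
`0 ⊕ M₂(ℂ)`. This ideal is not `F`-invariant: `F` moves the entry `2` of `0 ⊕ diag(2,0)` into
the first summand. -/

namespace Matrix

variable {m n R : Type*} [Fintype m] [PartialOrder R] [Ring R] [StarRing R]
  [StarOrderedRing R] [NoZeroDivisors R]

lemma conjTranspose_mul_self_apply_self_eq_zero {A : Matrix m n R} {i : n} :
    (Aᴴ * A) i i = 0 ↔ ∀ k, A k i = 0 :=
  dotProduct_star_self_eq_zero.trans funext_iff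

/-- Right multiplication by `single j i 1` moves column `j` to column `i`, so the `i`-th
diagonal entries of all `(A B)ᴴ (A B)` see every column of `A`. -/
lemma eq_zero_of_forall_conjTranspose_mul_mul_self_apply_self [Fintype n] [DecidableEq n]
    {A : Matrix m n R} (i : n) (h : ∀ B : Matrix n n R, ((A * B)ᴴ * (A * B)) i i = 0) :
    A = 0 := by
  ext k j
  simpa using conjTranspose_mul_self_apply_self_eq_zero.1 (h (single j i 1)) k

end Matrix

namespace QSSPaper

section GNSTriple

variable {B H : Type} [Ring B] [Algebra ℂ B] [StarRing B]
  [NormedAddCommGroup H] [InnerProductSpace ℂ H] [CompleteSpace H]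
  {φ : B → ℂ} {π : B →⋆ₐ[ℂ] (H →L[ℂ] H)} {ξ : H}

lemma IsGNSRepAlg.inner_self_map_apply (h : IsGNSRepAlg φ π ξ) (a : B) :
    ⟪π a ξ, π a ξ⟫_ℂ = φ (star a * a) := by
  rw [h.1, map_mul, map_star, ContinuousLinearMap.star_eq_adjoint,
    mul_apply_eq_comp, ContinuousLinearMap.adjoint_inner_right]

lemma IsGNSRepAlg.map_eq_zero_iff (h : IsGNSRepAlg φ π ξ) (p : B) :
    π p = 0 ↔ ∀ a, φ (star (p * a) * (p * a)) = 0 := by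
  simp only [← h.inner_self_map_apply, inner_self_eq_zero, map_mul,
    mul_apply_eq_comp]
  refine ⟨fun hp a => by rw [hp, zero_apply], fun hp => ?_⟩
  exact ContinuousLinearMap.ext_on h.2 (by rintro _ ⟨a, rfl⟩; exact hp a)

lemma IsGNSRepAlg.map_eq_zero_iff_fst_eq_zero {n C : Type} [Fintype n] [DecidableEq n]
    [Ring C] [Algebra ℂ C] [StarRing C] {π : (Matrix n n ℂ × C) →⋆ₐ[ℂ] (H →L[ℂ] H)} (i : n)
    (h : IsGNSRepAlg (fun p => p.1 i i) π ξ) (p : Matrix n n ℂ × C) :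
    π p = 0 ↔ p.1 = 0 := by
  simp only [h.map_eq_zero_iff, Prod.fst_mul, Prod.fst_star, Matrix.star_eq_conjTranspose]
  refine ⟨fun hp => Matrix.eq_zero_of_forall_conjTranspose_mul_mul_self_apply_self i
    fun b => by simpa using hp (b, 0), fun hp a => by simp [hp]⟩

end GNSTriple

/-- the remark after Proposition `prop:TinW*D`.
Let `A = M₂(ℂ) ⊕ M₂(ℂ)`, let `D ≅ ℂ ⊕ ℂ ⊕ ℂ` be the subalgebra of elements
`diag(a,b) ⊕ diag(b,c)`, let `F : A → D` be the conditional expectation with parameters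
`(a₁₁, (a₂₂ + b₁₁)/2, b₂₂)` and `ρ(a,b,c) = a`.  Then the kernel of the GNS representation
of `ρ ∘ F` is `0 ⊕ M₂(ℂ)`; the element `x = 0 ⊕ diag(2,0)` lies in the kernel while
`F x = diag(0,1) ⊕ diag(1,0)` does not; in particular `‖π(F x)‖ ≤ ‖π x‖` fails. -/
theorem statement_3 {H : Type}
    [NormedAddCommGroup H] [InnerProductSpace ℂ H] [CompleteSpace H]
    (F : Matrix (Fin 2) (Fin 2) ℂ × Matrix (Fin 2) (Fin 2) ℂ →
      Matrix (Fin 2) (Fin 2) ℂ × Matrix (Fin 2) (Fin 2) ℂ)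
    (hF : F = fun p =>
      (Matrix.diagonal ![p.1 0 0, (p.1 1 1 + p.2 0 0) / 2],
       Matrix.diagonal ![(p.1 1 1 + p.2 0 0) / 2, p.2 1 1]))
    (ρ : Matrix (Fin 2) (Fin 2) ℂ × Matrix (Fin 2) (Fin 2) ℂ → ℂ)
    (hρ : ρ = fun p => p.1 0 0)
    (π : (Matrix (Fin 2) (Fin 2) ℂ × Matrix (Fin 2) (Fin 2) ℂ) →⋆ₐ[ℂ] (H →L[ℂ] H)) (ξ : H)
    (hGNS : IsGNSRepAlg (fun p => ρ (F p)) π ξ) :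
    {p : Matrix (Fin 2) (Fin 2) ℂ × Matrix (Fin 2) (Fin 2) ℂ | π p = 0}
        = {p | p.1 = 0} ∧
      π (0, Matrix.diagonal ![2, 0]) = 0 ∧
      F (0, Matrix.diagonal ![2, 0]) = (Matrix.diagonal ![0, 1], Matrix.diagonal ![1, 0]) ∧
      π (F (0, Matrix.diagonal ![2, 0])) ≠ 0 ∧
      ¬ ‖π (F (0, Matrix.diagonal ![2, 0]))‖ ≤ ‖π (0, Matrix.diagonal ![2, 0])‖ := by
  have hρF : (fun p => ρ (F p)) = fun p => p.1 0 0 := by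
    subst hF hρ
    rfl
  rw [hρF] at hGNS
  have hker := hGNS.map_eq_zero_iff_fst_eq_zero 0
  have hFx : F (0, Matrix.diagonal ![2, 0]) =
      (Matrix.diagonal ![0, 1], Matrix.diagonal ![1, 0]) := by
    subst hF
    norm_num
  have hx : π (0, Matrix.diagonal ![2, 0]) = 0 := (hker _).2 rfl
  have hFx_ne : π (F (0, Matrix.diagonal ![2, 0])) ≠ 0 := by
    rw [Ne, hker, hFx]
    intro h
    simpa using congr_fun (congr_fun h 1) 1
  refine ⟨Set.ext hker, hx, hFx, hFx_ne, ?_⟩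
  rw [hx, norm_zero, not_le]
  exact norm_pos_iff.2 hFx_ne
end QSSPaper
end
end

section
/- Let p and q be self-adjoint projections in a unital C*-algebra and let s ≥ 2 be an integer. Then the following are equivalent: (i) (pq)^s + (p(1−q))^s + ((1−p)q)^s + ((1−p)(1−q))^s = 1; (ii) (pq)^s p + (p(1−q))^s p + ((1−p)q)^s (1−p) + ((1−p)(1−q))^s (1−p) = 1; (iii) p and q commute. -/
open scoped ComplexOrder InnerProductSpace

noncomputable section

namespace QSSPaper

section Aux

variable {B : Type} [CStarAlgebra B]

private lemma norm_proj_le_one {p : B} (h1 : star p = p) (h2 : p * p = p) : ‖p‖ ≤ 1 := by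
  have h := CStarRing.norm_star_mul_self (x := p)
  rw [h1, h2] at h
  nlinarith [norm_nonneg p]

private lemma pow_absorb_left {p q : B} (hp : p * p = p) :
    ∀ n : ℕ, p * (p * q) ^ (n + 1) = (p * q) ^ (n + 1)
  | 0 => by rw [pow_one, ← mul_assoc, hp]
  | n + 1 => by
      rw [pow_succ' (p * q) (n + 1), ← mul_assoc, ← mul_assoc, hp, mul_assoc]

private lemma pow_compress {p q : B} (hp : p * p = p) :
    ∀ n : ℕ, (p * q) ^ (n + 1) * p = (p * (q * p)) ^ (n + 1)
  | 0 => by rw [pow_one, pow_one, mul_assoc]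
  | n + 1 => by
      have h1 : p * (p * (q * p)) ^ (n + 1) = (p * (q * p)) ^ (n + 1) := by
        have := pow_absorb_left (q := q * p) hp (n := n)
        simpa [mul_assoc] using this
      rw [pow_succ' (p * q) (n + 1), mul_assoc, pow_compress hp n,
        ← h1, ← mul_assoc, mul_assoc p q p, ← pow_succ' (p * (q * p)) (n + 1)]

private lemma pow_absorb_right {p q : B} (hp : p * p = p) (n : ℕ) :
    (p * (q * p)) ^ (n + 1) * p = (p * (q * p)) ^ (n + 1) := by
  rw [pow_succ, mul_assoc, mul_assoc, mul_assoc, hp]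

private lemma pow_kill {p q : B} (hp : p * p = p) (n : ℕ) :
    p * ((1 - p) * q) ^ (n + 1) = 0 := by
  have h0 : p * (1 - p) = 0 := by rw [mul_sub, mul_one, hp, sub_self]
  rw [pow_succ' ((1 - p) * q) n, ← mul_assoc, ← mul_assoc, h0, zero_mul, zero_mul]

/-- The analytic core: the compressed identity forces commutation. -/
private lemma key (p q : B) (hp1 : star p = p) (hp2 : p * p = p)
    (hq1 : star q = q) (hq2 : q * q = q) {s : ℕ} (hs : 2 ≤ s)
    (h : (p * (q * p)) ^ s + (p * ((1 - q) * p)) ^ s = p) : p * q = q * p := by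
  letI := CStarAlgebra.spectralOrder B
  haveI := CStarAlgebra.spectralOrderedRing B
  have hpp : ∀ x : B, p * (p * x) = p * x := fun x => by rw [← mul_assoc, hp2]
  have hqq : ∀ x : B, q * (q * x) = q * x := fun x => by rw [← mul_assoc, hq2]
  set a := p * (q * p) with ha_def
  set b := p * ((1 - q) * p) with hb_def
  have h1q1 : star (1 - q : B) = 1 - q := by simp [hq1]
  have h1q2 : (1 - q) * (1 - q) = (1 - q : B) := by
    simp [mul_sub, sub_mul, hq2]
  -- nonnegativity
  have ha0 : (0 : B) ≤ a := by
    have : a = star (q * p) * (q * p) := by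
      rw [star_mul, hp1, hq1, mul_assoc, ← mul_assoc q q p, hq2]
    rw [this]; exact star_mul_self_nonneg _
  have hb0 : (0 : B) ≤ b := by
    have : b = star ((1 - q) * p) * ((1 - q) * p) := by
      rw [star_mul, hp1, h1q1, mul_assoc, ← mul_assoc (1 - q) (1 - q) p, h1q2]
    rw [this]; exact star_mul_self_nonneg _
  -- norms
  have hnp : ‖p‖ ≤ 1 := norm_proj_le_one hp1 hp2
  have hnq : ‖q‖ ≤ 1 := norm_proj_le_one hq1 hq2
  have hn1q : ‖(1 - q : B)‖ ≤ 1 := norm_proj_le_one h1q1 h1q2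
  have ha1 : a ≤ 1 := by
    rw [← CStarAlgebra.norm_le_one_iff_of_nonneg a ha0]
    have t1 := norm_mul_le p (q * p)
    have t2 := norm_mul_le q p
    nlinarith [norm_nonneg p, norm_nonneg q, norm_nonneg (q * p)]
  have hb1 : b ≤ 1 := by
    rw [← CStarAlgebra.norm_le_one_iff_of_nonneg b hb0]
    have t1 := norm_mul_le p ((1 - q) * p)
    have t2 := norm_mul_le (1 - q : B) p
    nlinarith [norm_nonneg p, norm_nonneg (1 - q : B), norm_nonneg ((1 - q) * p)]
  -- the squeeze
  have hab : a + b = p := by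
    rw [ha_def, hb_def]
    simp [mul_sub, sub_mul, mul_assoc, hpp, hp2]
  have has : a ^ s ≤ a ^ 2 := CStarAlgebra.pow_antitone ha0 ha1 hs
  have hbs : b ^ s ≤ b ^ 2 := CStarAlgebra.pow_antitone hb0 hb1 hs
  have ha2 : a ^ 2 ≤ a := by
    simpa using CStarAlgebra.pow_antitone ha0 ha1 (by norm_num : 1 ≤ 2)
  have hb2 : b ^ 2 ≤ b := by
    simpa using CStarAlgebra.pow_antitone hb0 hb1 (by norm_num : 1 ≤ 2)
  have hle : p ≤ a ^ 2 + b ^ 2 := h ▸ add_le_add has hbs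
  have hx : a ≤ a ^ 2 := by
    have h1 : (a - a ^ 2) + (b - b ^ 2) ≤ 0 := by
      have : a ^ 2 + b ^ 2 ≤ a + b := add_le_add ha2 hb2
      rw [hab] at this
      calc (a - a ^ 2) + (b - b ^ 2) = (a + b) - (a ^ 2 + b ^ 2) := by abel
        _ = p - (a ^ 2 + b ^ 2) := by rw [hab]
        _ ≤ 0 := sub_nonpos.mpr hle
    have h2 : a - a ^ 2 ≤ (a - a ^ 2) + (b - b ^ 2) :=
      le_add_of_nonneg_right (sub_nonneg.mpr hb2)
    exact sub_nonpos.mp (h2.trans h1)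
  have haa : a * a = a := by
    have := le_antisymm ha2 hx
    rw [sq] at this; exact this
  -- conclude
  set c := (p * q) * (1 - p) with hc_def
  have hcc : c * star c = 0 := by
    have hstar : star c = (1 - p) * (q * p) := by
      rw [hc_def, star_mul, star_mul, hp1, hq1]
      simp [hp1]
    rw [hc_def, hstar]
    have expand : ((p * q) * (1 - p)) * ((1 - p) * (q * p)) = a - a * a := by
      rw [ha_def]
      simp only [mul_sub, sub_mul, mul_one, one_mul, mul_assoc, hpp, hqq]
      abel
    rw [expand, haa, sub_self]
  have hc0 : c = 0 := by
    have hn : ‖c‖ * ‖c‖ = 0 := by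
      rw [← CStarRing.norm_self_mul_star, hcc, norm_zero]
    have : ‖c‖ = 0 := by nlinarith [norm_nonneg c]
    exact norm_eq_zero.mp this
  have hpqp : p * q = a := by
    have h5 : (p * q) * (1 - p) = p * q - a := by
      rw [ha_def, mul_sub, mul_one, mul_assoc]
    rw [← hc_def, hc0] at h5
    have := sub_eq_zero.mp h5.symm
    exact this
  have hsa : star a = a := by
    rw [ha_def, star_mul, star_mul, hp1, hq1, mul_assoc]
  have hqpa : q * p = star a := by
    rw [show q * p = star (p * q) from by rw [star_mul, hp1, hq1], hpqp]
  rw [hpqp, hqpa, hsa]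

end Aux

/-- Lemma `SpeichLemma`.
For self-adjoint projections `p`, `q` in a unital C*-algebra and an integer `s ≥ 2`, the
identities (i) and (ii) below each hold if and only if `p` and `q` commute. -/


theorem statement_10 {B : Type} [CStarAlgebra B] (p q : B)
    (hp : star p = p ∧ p * p = p) (hq : star q = q ∧ q * q = q)
    (s : ℕ) (hs : 2 ≤ s) :
    ((p * q) ^ s + (p * (1 - q)) ^ s + ((1 - p) * q) ^ s + ((1 - p) * (1 - q)) ^ s = 1
        ↔ p * q = q * p) ∧
    ((p * q) ^ s * p + (p * (1 - q)) ^ s * p + ((1 - p) * q) ^ s * (1 - p)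
          + ((1 - p) * (1 - q)) ^ s * (1 - p) = 1
        ↔ p * q = q * p) := by
  obtain ⟨hp1, hp2⟩ := hp
  obtain ⟨hq1, hq2⟩ := hq
  obtain ⟨k, rfl⟩ : ∃ k, s = k + 2 := ⟨s - 2, by omega⟩
  clear hs
  have hpp : ∀ x : B, p * (p * x) = p * x := fun x => by rw [← mul_assoc, hp2]
  have hqq : ∀ x : B, q * (q * x) = q * x := fun x => by rw [← mul_assoc, hq2]
  -- forward direction (commutation implies both identities)
  have fwd : p * q = q * p →
      ((p * q) ^ (k + 2) + (p * (1 - q)) ^ (k + 2) + ((1 - p) * q) ^ (k + 2)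
          + ((1 - p) * (1 - q)) ^ (k + 2) = 1) ∧
      ((p * q) ^ (k + 2) * p + (p * (1 - q)) ^ (k + 2) * p
          + ((1 - p) * q) ^ (k + 2) * (1 - p)
          + ((1 - p) * (1 - q)) ^ (k + 2) * (1 - p) = 1) := by
    intro hcomm
    have hip : IsIdempotentElem p := hp2
    have hiq : IsIdempotentElem q := hq2
    have cpq : Commute p q := hcomm
    have cp1q : Commute p (1 - q) := (Commute.one_right p).sub_right cpq
    have c1pq : Commute (1 - p) q := (Commute.one_left q).sub_left cpq
    have c1p1q : Commute (1 - p) (1 - q) := (Commute.one_right (1 - p)).sub_right c1pq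
    have e1 : IsIdempotentElem (p * q) := hip.mul_of_commute cpq hiq
    have e2 : IsIdempotentElem (p * (1 - q)) := hip.mul_of_commute cp1q hiq.one_sub
    have e3 : IsIdempotentElem ((1 - p) * q) := hip.one_sub.mul_of_commute c1pq hiq
    have e4 : IsIdempotentElem ((1 - p) * (1 - q)) :=
      hip.one_sub.mul_of_commute c1p1q hiq.one_sub
    have r1 : (p * q) ^ (k + 2) = p * q := e1.pow_succ_eq (k + 1)
    have r2 : (p * (1 - q)) ^ (k + 2) = p * (1 - q) := e2.pow_succ_eq (k + 1)
    have r3 : ((1 - p) * q) ^ (k + 2) = (1 - p) * q := e3.pow_succ_eq (k + 1)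
    have r4 : ((1 - p) * (1 - q)) ^ (k + 2) = (1 - p) * (1 - q) := e4.pow_succ_eq (k + 1)
    have hcomm' : ∀ x : B, p * (q * x) = q * (p * x) := fun x => by
      rw [← mul_assoc, hcomm, mul_assoc]
    constructor
    · rw [r1, r2, r3, r4]
      noncomm_ring
    · rw [r1, r2, r3, r4]
      simp only [mul_sub, sub_mul, mul_one, one_mul, mul_assoc, hcomm, hcomm',
        hp2, hq2, hpp, hqq]
      abel
  constructor
  · constructor
    · intro h
      have hcomp := congrArg (fun x => p * x * p) h
      simp only [mul_add, add_mul, mul_one] at hcomp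
      have c1 : p * (p * q) ^ (k + 2) * p = (p * (q * p)) ^ (k + 2) := by
        rw [pow_absorb_left hp2 (k + 1), pow_compress hp2 (k + 1)]
      have c2 : p * (p * (1 - q)) ^ (k + 2) * p = (p * ((1 - q) * p)) ^ (k + 2) := by
        rw [pow_absorb_left hp2 (k + 1), pow_compress hp2 (k + 1)]
      have c3 : p * ((1 - p) * q) ^ (k + 2) * p = 0 := by
        rw [pow_kill hp2 (k + 1), zero_mul]
      have c4 : p * ((1 - p) * (1 - q)) ^ (k + 2) * p = 0 := by
        rw [pow_kill hp2 (k + 1), zero_mul]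
      rw [c1, c2, c3, c4, add_zero, add_zero, hp2] at hcomp
      exact key p q hp1 hp2 hq1 hq2 (by omega) hcomp
    · exact fun h => (fwd h).1
  · constructor
    · intro h
      have hcomp := congrArg (fun x => p * x * p) h
      simp only [mul_add, add_mul, mul_one] at hcomp
      have c1 : p * ((p * q) ^ (k + 2) * p) * p = (p * (q * p)) ^ (k + 2) := by
        rw [← mul_assoc, pow_absorb_left hp2 (k + 1), pow_compress hp2 (k + 1),
          pow_absorb_right hp2 (k + 1)]
      have c2 : p * ((p * (1 - q)) ^ (k + 2) * p) * p = (p * ((1 - q) * p)) ^ (k + 2) := by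
        rw [← mul_assoc, pow_absorb_left hp2 (k + 1), pow_compress hp2 (k + 1),
          pow_absorb_right hp2 (k + 1)]
      have c3 : p * (((1 - p) * q) ^ (k + 2) * (1 - p)) * p = 0 := by
        rw [← mul_assoc, pow_kill hp2 (k + 1), zero_mul, zero_mul]
      have c4 : p * (((1 - p) * (1 - q)) ^ (k + 2) * (1 - p)) * p = 0 := by
        rw [← mul_assoc, pow_kill hp2 (k + 1), zero_mul, zero_mul]
      rw [c1, c2, c3, c4, add_zero, add_zero, hp2] at hcomp
      exact key p q hp1 hp2 hq1 hq2 (by omega) hcomp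
    · exact fun h => (fwd h).2

end QSSPaper
end
end

section
/- For a unital C*-algebra A, let q̌ : Afr → A be the quotient *-homomorphism sending each copy of A identically to A, and for a state φ on A let φ̌ = φ∘q̌. Then φ ↦ φ̌ is an affine embedding of the state space S(A) into QSS(A), and φ̌ is an extreme point of QSS(A) if and only if φ is a pure state of A. The restriction of this map to the tracial state space TS(A) is an affine embedding of TS(A) into TQSS(A), and for τ ∈ TS(A), τ̌ is an extreme point of TQSS(A) if and only if τ is an extreme point of TS(A). -/
open scoped ComplexOrder InnerProductSpace

noncomputable section

namespace QSSPaper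

section Aux

lemma seqProd_succ' {M : Type*} [Monoid M] {n : ℕ} (f : Fin (n+1) → M) :
    seqProd f = f 0 * seqProd (fun i : Fin n => f i.succ) := by
  simp [seqProd, List.ofFn_succ]

lemma magic_sum' {C : Type*} [Ring C] {k : ℕ} (u : Fin k → Fin k → C)
    (hrow : ∀ i, ∑ j, u i j = 1) :
    ∀ (n : ℕ) (i : Fin n → Fin k),
      ∑ j : Fin n → Fin k, seqProd (fun t => u (i t) (j t)) = 1 := by
  intro n
  induction n with
  | zero => intro i; simp [seqProd]
  | succ n ih =>
    intro i
    rw [← Equiv.sum_comp (Fin.consEquiv (fun _ : Fin (n+1) => Fin k))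
      (fun j => seqProd (fun t => u (i t) (j t))), Fintype.sum_prod_type]
    have key : ∀ (j₀ : Fin k) (j' : Fin n → Fin k),
        seqProd (fun t => u (i t) ((Fin.consEquiv (fun _ : Fin (n+1) => Fin k)) (j₀, j') t)) =
          u (i 0) j₀ * seqProd (fun t : Fin n => u (i t.succ) (j' t)) := by
      intro j₀ j'
      rw [seqProd_succ']
      simp [Fin.consEquiv]
    simp only [key, ← Finset.mul_sum, ih fun t => i t.succ, mul_one]
    exact hrow (i 0)

section StateLemmas

variable {B : Type*} [CStarAlgebra B]

lemma state_zero' {ψ : B → ℂ} (h : IsStateFun ψ) : ψ 0 = 0 := by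
  simpa using h.2.2.1 0 0

lemma state_sub' {ψ : B → ℂ} (h : IsStateFun ψ) (x y : B) : ψ (x - y) = ψ x - ψ y := by
  rw [sub_eq_add_neg, ← neg_one_smul ℂ y, h.2.1, h.2.2.1]
  ring

lemma state_quad' {ψ : B → ℂ} (h : IsStateFun ψ) (x : B) (c : ℂ) :
    ψ (star (x + c • 1) * (x + c • 1)) =
      ψ (star x * x) + c * ψ (star x) + (starRingEnd ℂ) c * ψ x + (starRingEnd ℂ) c * c := by
  have e : star (x + c • 1) * (x + c • 1) =
      star x * x + ((starRingEnd ℂ) c • x + (c • star x + (c * (starRingEnd ℂ) c) • (1:B))) := by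
    simp [star_add, star_smul, star_one, add_mul, mul_add, smul_mul_assoc, mul_smul_comm,
      smul_smul, add_assoc]
  rw [e]
  simp only [h.2.1, h.2.2.1]
  rw [h.1]
  ring

lemma state_star' {ψ : B → ℂ} (h : IsStateFun ψ) (x : B) :
    ψ (star x) = (starRingEnd ℂ) (ψ x) := by
  have h0 := h.2.2.2 x
  have h1 := h.2.2.2 (x + (1:ℂ) • 1)
  have h2 := h.2.2.2 (x + Complex.I • 1)
  rw [state_quad' h x 1] at h1
  rw [state_quad' h x Complex.I] at h2
  have him0 : (ψ (star x * x)).im = 0 := by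
    have := (Complex.le_def.mp h0).2; simpa using this.symm
  have him1 : (ψ (star x)).im + (ψ x).im = 0 := by
    have := (Complex.le_def.mp h1).2
    simp [him0, Complex.add_im, Complex.mul_im] at this
    linarith
  have him2 : (ψ (star x)).re - (ψ x).re = 0 := by
    have := (Complex.le_def.mp h2).2
    simp [him0, Complex.add_im, Complex.mul_im, Complex.I_re, Complex.I_im] at this
    linarith
  apply Complex.ext <;> simp [Complex.conj_re, Complex.conj_im] <;> linarith

lemma state_cs' {ψ : B → ℂ} (h : IsStateFun ψ) (x : B) (hx : ψ (star x * x) = 0) :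
    ψ x = 0 := by
  set z := ψ x with hz
  have hpos := h.2.2.2 (x + (-z) • 1)
  rw [state_quad' h x (-z), hx, state_star' h x] at hpos
  have hneg : (0:ℂ) ≤ -(z * (starRingEnd ℂ) z) := by
    convert hpos using 1; ring
  rw [Complex.mul_conj] at hneg
  have hre := (Complex.le_def.mp hneg).1
  simp at hre
  have h2 := Complex.normSq_nonneg z
  have h3 : Complex.normSq z = 0 := le_antisymm hre h2
  exact Complex.normSq_eq_zero.mp h3

lemma convex_zero' {a b : ℂ} (ha : 0 ≤ a) (hb : 0 ≤ b) {t : ℝ} (ht0 : 0 < t) (ht1 : t < 1)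
    (h : (t:ℂ) * a + (1 - (t:ℂ)) * b = 0) : a = 0 ∧ b = 0 := by
  have ha' := Complex.le_def.mp ha
  have hb' := Complex.le_def.mp hb
  have haim : a.im = 0 := by simpa using ha'.2.symm
  have hbim : b.im = 0 := by simpa using hb'.2.symm
  have hare : 0 ≤ a.re := by simpa using ha'.1
  have hbre : 0 ≤ b.re := by simpa using hb'.1
  have hre : t * a.re + (1 - t) * b.re = 0 := by
    have := congrArg Complex.re h
    simpa [Complex.add_re, Complex.mul_re, Complex.sub_re, Complex.sub_im,
      Complex.ofReal_re, Complex.ofReal_im, haim, hbim] using this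
  have h1 : 0 ≤ t * a.re := mul_nonneg ht0.le hare
  have h2 : 0 ≤ (1 - t) * b.re := mul_nonneg (by linarith) hbre
  have e1 : t * a.re = 0 := by linarith
  have e2 : (1 - t) * b.re = 0 := by linarith
  have hat : a.re = 0 := by
    rcases mul_eq_zero.mp e1 with h | h
    · exact absurd h (ne_of_gt ht0)
    · exact h
  have hbt : b.re = 0 := by
    rcases mul_eq_zero.mp e2 with h | h
    · exact absurd h (by intro hh; nlinarith)
    · exact h
  constructor <;> apply Complex.ext <;> simp [hat, hbt, haim, hbim]

lemma stateOn_univ' {φ : B → ℂ} (h : IsStateFun φ) : IsStateOn (Set.univ : Set B) φ :=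
  ⟨h.1, fun x _ y _ => h.2.1 x y, fun c x _ => h.2.2.1 c x, fun x _ => h.2.2.2 x⟩

lemma stateFun_of_on' {φ : B → ℂ} (h : IsStateOn (Set.univ : Set B) φ) : IsStateFun φ :=
  ⟨h.1, fun x y => h.2.1 x trivial y trivial, fun c x => h.2.2.1 c x trivial,
    fun x => h.2.2.2 x trivial⟩

end StateLemmas

section FP

variable {A Afr : Type} [CStarAlgebra A] [CStarAlgebra Afr]

lemma qchk_seqProd' (lam : ℕ → A →⋆ₐ[ℂ] Afr) (qchk : Afr →⋆ₐ[ℂ] A)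
    (hq : ∀ (i : ℕ) (a : A), qchk (lam i a) = a)
    {n : ℕ} {ι : Type*} (i : ι → ℕ) (a : Fin n → A) (f : Fin n → ι) :
    qchk (seqProd fun t => lam (i (f t)) (a t)) = seqProd a := by
  unfold seqProd
  rw [map_list_prod, List.map_ofFn]
  have e : (⇑qchk ∘ fun t => lam (i (f t)) (a t)) = a := by
    funext t; exact hq _ _
  rw [e]

lemma pull_state' (lam : ℕ → A →⋆ₐ[ℂ] Afr) {ψ : Afr → ℂ} (h : IsStateFun ψ) :
    IsStateFun (fun a => ψ (lam 0 a)) :=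
  ⟨by simp only []; rw [map_one]; exact h.1,
   fun x y => by simp only []; rw [map_add]; exact h.2.1 _ _,
   fun c x => by simp only []; rw [map_smul]; exact h.2.2.1 _ _,
   fun x => by simp only []; rw [map_mul, map_star]; exact h.2.2.2 _⟩

lemma mem_QSS' (lam : ℕ → A →⋆ₐ[ℂ] Afr) (qchk : Afr →⋆ₐ[ℂ] A)
    (hq : ∀ (i : ℕ) (a : A), qchk (lam i a) = a)
    {φ : A → ℂ} (hφ : IsStateFun φ) : (fun x : Afr => φ (qchk x)) ∈ QSSset lam := by
  constructor
  · refine ⟨?_, ?_, ?_, ?_⟩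
    · simp only []; rw [map_one]; exact hφ.1
    · intro x y; simp only []; rw [map_add]; exact hφ.2.1 _ _
    · intro c x; simp only []; rw [map_smul]; exact hφ.2.2.1 _ _
    · intro x; simp only []; rw [map_mul, map_star]; exact hφ.2.2.2 _
  · intro k C _ u hu n i a
    have hval : ∀ j : Fin n → Fin k,
        φ (qchk (seqProd fun t => lam (j t) (a t))) = φ (seqProd a) := fun j => by
      rw [qchk_seqProd' lam qchk hq _ a j]
    simp only [hval]
    rw [← Finset.smul_sum, magic_sum' u hu.2.2 n i]

lemma decomp' (lam : ℕ → A →⋆ₐ[ℂ] Afr) (qchk : Afr →⋆ₐ[ℂ] A)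
    (hq : ∀ (i : ℕ) (a : A), qchk (lam i a) = a)
    {φ : A → ℂ} {ψ₁ ψ₂ : Afr → ℂ} (hφ : IsStateFun φ)
    (h₁ : IsStateFun ψ₁) (h₂ : IsStateFun ψ₂) {t : ℝ} (ht0 : 0 < t) (ht1 : t < 1)
    (hcomb : (fun x : Afr => φ (qchk x)) = t • ψ₁ + (1 - t) • ψ₂) :
    (∀ x : Afr, ψ₁ x = ψ₁ (lam 0 (qchk x))) ∧ (∀ x : Afr, ψ₂ x = ψ₂ (lam 0 (qchk x))) ∧
      (∀ x : Afr, φ (qchk x) = (t:ℂ) * ψ₁ x + (1 - (t:ℂ)) * ψ₂ x) := by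
  have hc : ∀ x : Afr, φ (qchk x) = (t:ℂ) * ψ₁ x + (1 - (t:ℂ)) * ψ₂ x := by
    intro x
    have := congrFun hcomb x
    simpa [Pi.add_apply, Pi.smul_apply, Complex.real_smul, Complex.ofReal_sub] using this
  have hker : ∀ x : Afr, qchk x = 0 → ψ₁ x = 0 ∧ ψ₂ x = 0 := by
    intro x hx
    have h0 : φ (qchk (star x * x)) = 0 := by
      rw [map_mul, map_star, hx]
      simpa using state_zero' hφ
    have hcx := hc (star x * x)
    rw [h0] at hcx
    obtain ⟨e1, e2⟩ := convex_zero' (h₁.2.2.2 x) (h₂.2.2.2 x) ht0 ht1 hcx.symm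
    exact ⟨state_cs' h₁ x e1, state_cs' h₂ x e2⟩
  have factor : ∀ (ψ : Afr → ℂ), IsStateFun ψ → (∀ x : Afr, qchk x = 0 → ψ x = 0) →
      ∀ x : Afr, ψ x = ψ (lam 0 (qchk x)) := by
    intro ψ hψ hk x
    have hd : qchk (x - lam 0 (qchk x)) = 0 := by rw [map_sub, hq]; simp
    have h0 : ψ (x - lam 0 (qchk x)) = 0 := hk _ hd
    rw [state_sub' hψ] at h0
    exact (sub_eq_zero.mp h0)
  exact ⟨factor ψ₁ h₁ (fun x hx => (hker x hx).1), factor ψ₂ h₂ (fun x hx => (hker x hx).2), hc⟩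

end FP

end Aux

/-- Proposition `prop:amalgaA`.
Let `q̌ : Afr → A` be the quotient homomorphism sending each copy of `A` identically to
`A`, and for a state `φ` on `A` let `φ̌ = φ ∘ q̌`.  Then `φ ↦ φ̌` is an affine embedding of
`S(A)` into `QSS(A)`; `φ̌` is extreme in `QSS(A)` iff `φ` is pure; the restriction to
tracial states embeds `TS(A)` into `TQSS(A)`, and `τ̌` is extreme in `TQSS(A)` iff `τ` is
extreme in `TS(A)`. -/
theorem statement_18 {A Afr : Type} [CStarAlgebra A] [CStarAlgebra Afr]
    (lam : ℕ → A →⋆ₐ[ℂ] Afr) (hUniv : IsUnivFreeProduct lam)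
    (qchk : Afr →⋆ₐ[ℂ] A) (hq : ∀ (i : ℕ) (a : A), qchk (lam i a) = a) :
    -- `φ ↦ φ̌` maps states to quantum symmetric states …
    (∀ φ : A → ℂ, IsStateFun φ → (fun x : Afr => φ (qchk x)) ∈ QSSset lam) ∧
    -- … injectively …
    (∀ φ φ' : A → ℂ, IsStateFun φ → IsStateFun φ' →
      (fun x : Afr => φ (qchk x)) = (fun x : Afr => φ' (qchk x)) → φ = φ') ∧
    -- … and affinely
    (∀ φ φ' : A → ℂ, IsStateFun φ → IsStateFun φ' → ∀ t : ℝ, 0 ≤ t → t ≤ 1 →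
      (fun x : Afr => ((t • φ + (1 - t) • φ') : A → ℂ) (qchk x))
        = t • (fun x : Afr => φ (qchk x)) + (1 - t) • fun x : Afr => φ' (qchk x)) ∧
    -- `φ̌` is extreme in `QSS(A)` iff `φ` is a pure state of `A`
    (∀ φ : A → ℂ, IsStateFun φ →
      (IsExtremeIn (QSSset lam) (fun x : Afr => φ (qchk x)) ↔
        IsPureOn (Set.univ : Set A) φ)) ∧
    -- tracial states are sent to tracial quantum symmetric states
    (∀ τ : A → ℂ, IsStateFun τ → (∀ x y : A, τ (x * y) = τ (y * x)) →
      (fun x : Afr => τ (qchk x)) ∈ TQSSset lam) ∧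
    -- `τ̌` is extreme in `TQSS(A)` iff `τ` is extreme in `TS(A)`
    (∀ τ : A → ℂ, IsStateFun τ → (∀ x y : A, τ (x * y) = τ (y * x)) →
      (IsExtremeIn (TQSSset lam) (fun x : Afr => τ (qchk x)) ↔
        IsExtremeIn {φ : A → ℂ | IsStateFun φ ∧ ∀ x y : A, φ (x * y) = φ (y * x)} τ)) := by
  refine ⟨?_, ?_, ?_, ?_, ?_, ?_⟩
  · -- states map to QSS
    intro φ hφ
    exact mem_QSS' lam qchk hq hφ
  · -- injectivity
    intro φ φ' _ _ h
    funext a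
    have := congrFun h (lam 0 a)
    simpa [hq] using this
  · -- affine
    intro φ φ' _ _ t _ _
    funext x
    simp [Pi.add_apply, Pi.smul_apply]
  · -- extreme in QSS ↔ pure
    intro φ hφ
    constructor
    · intro hext
      refine ⟨stateOn_univ' hφ, ?_⟩
      intro φ₁ φ₂ hφ₁ hφ₂ t ht0 ht1 hcomb x _
      have hs₁ : IsStateFun φ₁ := stateFun_of_on' hφ₁
      have hs₂ : IsStateFun φ₂ := stateFun_of_on' hφ₂
      have heq : (fun x : Afr => φ (qchk x)) =
          t • (fun x : Afr => φ₁ (qchk x)) + (1 - t) • fun x : Afr => φ₂ (qchk x) := by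
        funext y
        have := hcomb (qchk y) trivial
        simpa [Pi.add_apply, Pi.smul_apply, Complex.real_smul] using this
      obtain ⟨e1, e2⟩ := hext.2 _ (mem_QSS' lam qchk hq hs₁) _ (mem_QSS' lam qchk hq hs₂)
        t ht0 ht1 heq
      have g1 := congrFun e1 (lam 0 x)
      have g2 := congrFun e2 (lam 0 x)
      simp only [hq] at g1 g2
      rw [g1, g2]
    · intro hpure
      refine ⟨mem_QSS' lam qchk hq hφ, ?_⟩
      intro ψ₁ hψ₁ ψ₂ hψ₂ t ht0 ht1 hcomb
      obtain ⟨f1, f2, hc⟩ := decomp' lam qchk hq hφ hψ₁.1 hψ₂.1 ht0 ht1 hcomb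
      set φ₁ : A → ℂ := fun a => ψ₁ (lam 0 a) with hφ₁def
      set φ₂ : A → ℂ := fun a => ψ₂ (lam 0 a) with hφ₂def
      have hs₁ : IsStateFun φ₁ := pull_state' lam hψ₁.1
      have hs₂ : IsStateFun φ₂ := pull_state' lam hψ₂.1
      have hcomb' : ∀ a ∈ (Set.univ : Set A), φ a = t * φ₁ a + (1 - t) * φ₂ a := by
        intro a _
        have := hc (lam 0 a)
        rw [hq] at this
        push_cast at this ⊢
        exact this
      have heq12 := hpure.2 φ₁ φ₂ (stateOn_univ' hs₁) (stateOn_univ' hs₂) t ht0 ht1 hcomb'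
      have hφ1 : ∀ a : A, φ₁ a = φ a := by
        intro a
        have hx := hcomb' a trivial
        rw [← heq12 a trivial] at hx
        push_cast at hx
        linear_combination -hx
      have hφ2 : ∀ a : A, φ₂ a = φ a := by
        intro a
        have hx := hcomb' a trivial
        rw [heq12 a trivial] at hx
        push_cast at hx
        linear_combination -hx
      constructor
      · funext x
        rw [f1 x]
        exact hφ1 (qchk x)
      · funext x
        rw [f2 x]
        exact hφ2 (qchk x)
  · -- tracial states map to TQSS
    intro τ hτ htr
    refine ⟨mem_QSS' lam qchk hq hτ, ?_⟩
    intro x y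
    simp only [map_mul]
    exact htr _ _
  · -- extreme in TQSS ↔ extreme in TS
    intro τ hτ htr
    constructor
    · intro hext
      refine ⟨Set.mem_setOf.mpr ⟨hτ, htr⟩, ?_⟩
      intro φ₁ h₁ φ₂ h₂ t ht0 ht1 hcomb
      have htq : ∀ (φ' : A → ℂ), φ' ∈ {φ : A → ℂ | IsStateFun φ ∧ ∀ x y : A, φ (x * y) = φ (y * x)} →
          (fun x : Afr => φ' (qchk x)) ∈ TQSSset lam := by
        intro φ' hφ'
        refine ⟨mem_QSS' lam qchk hq hφ'.1, ?_⟩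
        intro x y
        simp only [map_mul]
        exact hφ'.2 _ _
      have heq : (fun x : Afr => τ (qchk x)) =
          t • (fun x : Afr => φ₁ (qchk x)) + (1 - t) • fun x : Afr => φ₂ (qchk x) := by
        funext y
        have := congrFun hcomb (qchk y)
        simpa [Pi.add_apply, Pi.smul_apply] using this
      obtain ⟨e1, e2⟩ := hext.2 _ (htq φ₁ h₁) _ (htq φ₂ h₂) t ht0 ht1 heq
      constructor
      · funext a
        have := congrFun e1 (lam 0 a)
        simpa [hq] using this
      · funext a
        have := congrFun e2 (lam 0 a)
        simpa [hq] using this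
    · intro hextTS
      refine ⟨⟨mem_QSS' lam qchk hq hτ, fun x y => by simp only [map_mul]; exact htr _ _⟩, ?_⟩
      intro ψ₁ hψ₁ ψ₂ hψ₂ t ht0 ht1 hcomb
      obtain ⟨f1, f2, hc⟩ := decomp' lam qchk hq hτ hψ₁.1.1 hψ₂.1.1 ht0 ht1 hcomb
      set φ₁ : A → ℂ := fun a => ψ₁ (lam 0 a) with hφ₁def
      set φ₂ : A → ℂ := fun a => ψ₂ (lam 0 a) with hφ₂def
      have hs₁ : IsStateFun φ₁ := pull_state' lam hψ₁.1.1
      have hs₂ : IsStateFun φ₂ := pull_state' lam hψ₂.1.1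
      have htr₁ : ∀ x y : A, φ₁ (x * y) = φ₁ (y * x) := by
        intro x y
        simp only [hφ₁def, map_mul]
        exact hψ₁.2 _ _
      have htr₂ : ∀ x y : A, φ₂ (x * y) = φ₂ (y * x) := by
        intro x y
        simp only [hφ₂def, map_mul]
        exact hψ₂.2 _ _
      have hτeq : τ = t • φ₁ + (1 - t) • φ₂ := by
        funext a
        have := hc (lam 0 a)
        rw [hq] at this
        simpa [Pi.add_apply, Pi.smul_apply, Complex.real_smul] using this
      obtain ⟨e1, e2⟩ := hextTS.2 φ₁ ⟨hs₁, htr₁⟩ φ₂ ⟨hs₂, htr₂⟩ t ht0 ht1 hτeq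
      constructor
      · funext x
        rw [f1 x]
        have := congrFun e1 (qchk x)
        exact this
      · funext x
        rw [f2 x]
        have := congrFun e2 (qchk x)
        exact this
end QSSPaper
end
end
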